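/- arXiv:2011.05610 — 5 statements merged into one kernel-verified Lean document; each statement's English description precedes it below -/
import Mathlib

section
/- If T[MS[i+1].pos − 1] = P[i], then MS[i].len = MS[i+1].len + 1 and the position MS[i+1].pos − 1 witnesses an occurrence of the length-(MS[i+1].len + 1) prefix of P[i..m−1] in T; i.e., setting MS[i].pos = MS[i+1].pos − 1 gives valid matching statistics at i. -/
theorem List.take_succ_drop_eq_getElem?_toList_append {α : Type*} (l : List α) (n k : ℕ) :
    (l.drop n).take (k + 1) = l[n]?.toList ++ (l.drop (n + 1)).take k := by
  induction l generalizing n with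
  | nil => simp
  | cons a l ih => cases n <;> simp [ih]

theorem ms_step_matching_char_general {α : Type*} (T P : List α)
    (i pos len : ℕ)
    (hpos : 1 ≤ pos)
    (hoccur : (T.drop pos).take len = (P.drop (i + 1)).take len)
    (hmaximal : i + 1 + len = P.length ∨ ¬ ((P.drop (i + 1)).take (len + 1) <:+: T))
    (hchar : T[pos - 1]? = P[i]?) :
    (P.drop i).take (len + 1) = (T.drop (pos - 1)).take (len + 1) ∧
      (i + (len + 1) = P.length ∨ ¬ ((P.drop i).take (len + 2) <:+: T)) := by
  have hT : (T.drop (pos - 1)).take (len + 1) = T[pos - 1]?.toList ++ (T.drop pos).take len := by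
    rw [List.take_succ_drop_eq_getElem?_toList_append, Nat.sub_add_cancel hpos]
  refine ⟨?_, hmaximal.imp (by omega) ?_⟩
  · rw [List.take_succ_drop_eq_getElem?_toList_append, hT, hchar, hoccur]
  · intro hshorter hlonger
    rw [List.take_succ_drop_eq_getElem?_toList_append] at hlonger
    exact hshorter ((List.suffix_append _ _).isInfix.trans hlonger)

/-- if `MS[i+1] = (pos, len)` are valid matching statistics at
position `i+1` (there is an occurrence `T[pos..pos+len-1] = P[i+1..i+len]`
which is maximal), `pos ≥ 1`, and `T[pos-1] = P[i]` (i.e. `BWT[q] = P[i]`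
for `q = ISA[pos]`), then setting `MS[i] = (pos - 1, len + 1)` gives valid
matching statistics at position `i`: the length-`(len+1)` prefix of
`P[i..m-1]` occurs at `T[pos-1..]` and no longer prefix occurs in `T`. -/
theorem ms_step_matching_char {α : Type*} (T P : List α)
    (i pos len : ℕ)
    (hpos : 1 ≤ pos)
    (hlenP : i + 1 + len ≤ P.length)
    (hlenT : pos + len ≤ T.length)
    (hoccur : (T.drop pos).take len = (P.drop (i + 1)).take len)
    (hmaximal : i + 1 + len = P.length ∨ ¬ ((P.drop (i + 1)).take (len + 1) <:+: T))
    (hchar : T[pos - 1]? = P[i]?) :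
    (P.drop i).take (len + 1) = (T.drop (pos - 1)).take (len + 1) ∧
      (i + (len + 1) = P.length ∨ ¬ ((P.drop i).take (len + 2) <:+: T)) :=
  ms_step_matching_char_general T P i pos len hpos hoccur hmaximal hchar
end

section
/- If the suffix array SA of T lists suffixes in increasing lexicographic order and LCP[i] denotes the length of the longest common prefix of the suffixes SA[i−1] and SA[i], then for i < j, the longest common prefix of suffixes SA[i] and SA[j] equals min(LCP[i+1], ..., LCP[j]). -/
/-!
Two suffixes share a prefix of length `m ≤ |T|` exactly when `m ≤ lce`. Sharing a prefix of
length `m` is an equivalence relation, so a prefix of length `min LCP[i+1..j]`, shared by all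
neighbours `SA[k-1], SA[k]`, is shared by `SA[i]` and `SA[j]`. Conversely, the prefix shared by
`SA[i]` and `SA[j]` is shared by every suffix sorted between them, since lexicographic order
cannot leave a common prefix and come back to it.
-/

/-- `lce T a b` = length of the longest common prefix of the suffixes
`T[a..]` and `T[b..]`. -/
noncomputable def lce {α : Type*} (T : List α) (a b : ℕ) : ℕ :=
  letI := Classical.decPred (fun ℓ : ℕ => (T.drop a).take ℓ = (T.drop b).take ℓ)
  Nat.findGreatest (fun ℓ : ℕ => (T.drop a).take ℓ = (T.drop b).take ℓ) T.length

theorem List.take_eq_of_lex_of_lex {α : Type*} [Preorder α] :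
    ∀ (m : ℕ) {x y z : List α}, List.Lex (· < ·) x y → List.Lex (· < ·) y z →
      x.take m = z.take m → y.take m = x.take m
  | 0, _, _, _, _, _, _ => rfl
  | _ + 1, [], _, _, _, hyz, hxz => by cases hyz <;> simp_all
  | _ + 1, _ :: _, [], _, hxy, _, _ => nomatch hxy
  | _ + 1, _ :: _, _ :: _, [], _, _, hxz => by simp at hxz
  | m + 1, a :: x, b :: y, c :: z, hxy, hyz, hxz => by
    simp only [List.take_succ_cons, List.cons.injEq] at hxz ⊢
    obtain ⟨rfl, hxz⟩ := hxz
    cases hxy with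
    | cons hxy =>
      cases hyz with
      | cons hyz => exact ⟨rfl, take_eq_of_lex_of_lex m hxy hyz hxz⟩
      | rel hba => exact absurd hba (lt_irrefl _)
    | rel hab =>
      cases hyz with
      | cons => exact absurd hab (lt_irrefl _)
      | rel hba => exact absurd (hab.trans hba) (lt_irrefl _)

theorem take_eq_of_lex_sorted {α : Type*} [Preorder α] {s : ℕ → List α} {n : ℕ}
    (hs : ∀ i j, i < j → j < n → List.Lex (· < ·) (s i) (s j))
    {m i j k : ℕ} (hik : i ≤ k) (hkj : k ≤ j) (hj : j < n)
    (hm : (s i).take m = (s j).take m) : (s k).take m = (s i).take m := by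
  rcases hik.eq_or_lt with rfl | hik
  · rfl
  rcases hkj.eq_or_lt with rfl | hkj
  · exact hm.symm
  exact List.take_eq_of_lex_of_lex m (hs i k hik (by omega)) (hs k j hkj hj) hm

theorem eq_of_forall_mem_Icc_pred_eq {β : Type*} (g : ℕ → β) {i j : ℕ} (hij : i ≤ j)
    (h : ∀ k ∈ Finset.Icc (i + 1) j, g (k - 1) = g k) : g i = g j := by
  induction j, hij using Nat.le_induction with
  | base => rfl
  | succ j hij ih =>
    refine (ih fun k hk => h k ?_).trans (h (j + 1) ?_) <;>
      simp only [Finset.mem_Icc] at * <;> omega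

section lce

variable {α : Type*} {T : List α} {a b m : ℕ}

theorem lce_le_length : lce T a b ≤ T.length :=
  @Nat.findGreatest_le _ (Classical.decPred _) _

theorem le_lce (hm : m ≤ T.length) (h : (T.drop a).take m = (T.drop b).take m) :
    m ≤ lce T a b :=
  @Nat.le_findGreatest _ _ (Classical.decPred _) _ hm h

theorem take_eq_of_le_lce (hm : m ≤ lce T a b) : (T.drop a).take m = (T.drop b).take m := by
  have hlce : (T.drop a).take (lce T a b) = (T.drop b).take (lce T a b) :=
    @Nat.findGreatest_spec 0 (fun ℓ => (T.drop a).take ℓ = (T.drop b).take ℓ)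
      (Classical.decPred _) _ (Nat.zero_le _) rfl
  rw [← min_eq_left hm, ← List.take_take, hlce, List.take_take]

end lce

theorem inf'_lce_le_lce {α : Type*} (T : List α) (p : ℕ → ℕ) {i j : ℕ} (hij : i < j) :
    (Finset.Icc (i + 1) j).inf' (Finset.nonempty_Icc.mpr hij) (fun k => lce T (p (k - 1)) (p k))
      ≤ lce T (p i) (p j) := by
  have hjmem : j ∈ Finset.Icc (i + 1) j := Finset.mem_Icc.mpr ⟨hij, le_rfl⟩
  refine le_lce ((Finset.inf'_le _ hjmem).trans lce_le_length) ?_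
  exact eq_of_forall_mem_Icc_pred_eq (fun k => (T.drop (p k)).take _) hij.le
    fun k hk => take_eq_of_le_lce (Finset.inf'_le _ hk)

theorem lce_le_lce_of_sorted {α : Type*} [Preorder α] {T : List α} {SA : ℕ → ℕ}
    (hsorted : ∀ i j, i < j → j < T.length →
      List.Lex (· < ·) (T.drop (SA i)) (T.drop (SA j)))
    {i j k : ℕ} (hk : k ∈ Finset.Icc (i + 1) j) (hj : j < T.length) :
    lce T (SA i) (SA j) ≤ lce T (SA (k - 1)) (SA k) := by
  obtain ⟨hik, hkj⟩ := Finset.mem_Icc.mp hk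
  have hshared := take_eq_of_le_lce (T := T) (a := SA i) (b := SA j) le_rfl
  refine le_lce lce_le_length ?_
  exact (take_eq_of_lex_sorted hsorted (by omega) (by omega) hj hshared).trans
    (take_eq_of_lex_sorted hsorted (by omega) hkj hj hshared).symm

theorem lce_eq_range_min_lcp_general {α : Type*} [LinearOrder α]
    (T : List α) (SA : ℕ → ℕ)
    (hsorted : ∀ i j, i < j → j < T.length →
      List.Lex (· < ·) (T.drop (SA i)) (T.drop (SA j)))
    (i j : ℕ) (hij : i < j) (hj : j < T.length) :
    lce T (SA i) (SA j) =
      (Finset.Icc (i + 1) j).inf' (Finset.nonempty_Icc.mpr hij)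
        (fun k => lce T (SA (k - 1)) (SA k)) :=
  le_antisymm (Finset.le_inf' _ _ fun _ hk => lce_le_lce_of_sorted hsorted hk hj)
    (inf'_lce_le_lce T SA hij)

/-- if `SA` lists the suffixes of `T` in increasing lexicographic
order and `LCP[k] = lce(SA[k-1], SA[k])`, then for ranks `i < j` the longest
common prefix of the suffixes `SA[i]` and `SA[j]` equals
`min(LCP[i+1], ..., LCP[j])`. -/
theorem lce_eq_range_min_lcp {α : Type*} [LinearOrder α]
    (T : List α) (SA : ℕ → ℕ)
    (hSA : ∀ i, i < T.length → SA i < T.length)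
    (hsorted : ∀ i j, i < j → j < T.length →
      List.Lex (· < ·) (T.drop (SA i)) (T.drop (SA j)))
    (i j : ℕ) (hij : i < j) (hj : j < T.length) :
    lce T (SA i) (SA j) =
      (Finset.Icc (i + 1) j).inf' (Finset.nonempty_Icc.mpr hij)
        (fun k => lce T (SA (k - 1)) (SA k)) :=
  lce_eq_range_min_lcp_general T SA hsorted i j hij hj
end

section
/- With thresholds defined as positions of minima in LCP ranges: given q' < q < q'' where q', q'' are suffix-array ranks of suffixes at positions p', p'' and q is the rank of the suffix at position s, then LCE(p', s) ≥ LCE(p'', s) if and only if some position attaining min(LCP[q'+1..q'']) lies in the interval [q+1, q'']. -/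
/-- The LCP array of `T` w.r.t. the suffix array `SA`. -/
noncomputable def lcpArr {α : Type*} (T : List α) (SA : ℕ → ℕ) (k : ℕ) : ℕ :=
  lce T (SA (k - 1)) (SA k)

def SuffixesSorted {α : Type*} [LinearOrder α] (T : List α) (SA : ℕ → ℕ) : Prop :=
  ∀ i j, i < j → j < T.length → List.Lex (· < ·) (T.drop (SA i)) (T.drop (SA j))

namespace List

variable {α : Type*} [LinearOrder α]

theorem take_eq_of_lex_of_lex_s10 :
    ∀ {m : ℕ} {x y z : List α}, Lex (· < ·) x y → Lex (· < ·) y z →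
      x.take m = z.take m → y.take m = x.take m
  | 0, _, _, _, _, _, _ => rfl
  | _ + 1, _, _, _, .nil, .cons _, h => by simp at h
  | _ + 1, _, _, _, .nil, .rel _, h => by simp at h
  | _ + 1, _, _, _, .cons hxy, .cons hyz, h => by
    simp only [take_succ_cons, cons.injEq, true_and] at h ⊢
    exact take_eq_of_lex_of_lex_s10 hxy hyz h
  | _ + 1, _, _, _, .cons _, .rel hac, h => by
    simp only [take_succ_cons, cons.injEq] at h
    exact absurd (h.1 ▸ hac) (lt_irrefl _)
  | _ + 1, _, _, _, .rel hab, .cons _, h => by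
    simp only [take_succ_cons, cons.injEq] at h
    exact absurd (h.1 ▸ hab) (lt_irrefl _)
  | _ + 1, _, _, _, .rel hab, .rel hbc, h => by
    simp only [take_succ_cons, cons.injEq] at h
    exact absurd (h.1 ▸ hab.trans hbc) (lt_irrefl _)

end List

namespace Finset

theorem inf'_Icc_eq_min {β : Type*} [LinearOrder β] (f : ℕ → β) {a b c : ℕ}
    (hab : a < b) (hbc : b < c) :
    (Icc (a + 1) c).inf' (nonempty_Icc.mpr (by omega)) f =
      min ((Icc (a + 1) b).inf' (nonempty_Icc.mpr hab) f)
        ((Icc (b + 1) c).inf' (nonempty_Icc.mpr hbc) f) := by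
  have hsplit : Icc (a + 1) c = Icc (a + 1) b ∪ Icc (b + 1) c := by
    ext x
    simp only [mem_union, mem_Icc]
    omega
  rw [inf'_congr _ hsplit fun _ _ ↦ rfl, inf'_union]

theorem inf'_le_iff_exists_eq_min {ι β : Type*} [LinearOrder β] {s : Finset ι}
    (hs : s.Nonempty) (f : ι → β) (a : β) :
    s.inf' hs f ≤ a ↔ ∃ k ∈ s, f k = min a (s.inf' hs f) := by
  constructor
  · intro hle
    obtain ⟨k, hk, hfk⟩ := exists_mem_eq_inf' hs f
    exact ⟨k, hk, by rw [min_eq_right hle, hfk]⟩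
  · rintro ⟨k, hk, hfk⟩
    calc s.inf' hs f ≤ f k := inf'_le f hk
      _ = min a (s.inf' hs f) := hfk
      _ ≤ a := min_le_left _ _

end Finset

section LCE

variable {α : Type*} (T : List α)

theorem le_lce_iff {a b ℓ : ℕ} :
    ℓ ≤ lce T a b ↔ ℓ ≤ T.length ∧ (T.drop a).take ℓ = (T.drop b).take ℓ := by
  let P := fun ℓ ↦ (T.drop a).take ℓ = (T.drop b).take ℓ
  let := Classical.decPred P
  refine ⟨fun h ↦ ⟨h.trans (Nat.findGreatest_le _), ?_⟩, fun ⟨hℓ, h⟩ ↦ Nat.le_findGreatest hℓ h⟩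
  have hlce : (T.drop a).take (lce T a b) = (T.drop b).take (lce T a b) :=
    Nat.findGreatest_spec (P := P) (Nat.zero_le _) rfl
  simpa [List.take_take, min_eq_left h] using congrArg (List.take ℓ) hlce

theorem lce_comm (a b : ℕ) : lce T a b = lce T b a :=
  eq_of_forall_le_iff fun ℓ ↦ by rw [le_lce_iff, le_lce_iff, eq_comm]

theorem min_lce_le_lce (a b c : ℕ) : min (lce T a b) (lce T b c) ≤ lce T a c := by
  obtain ⟨hlen, hab⟩ := (le_lce_iff T).1 (min_le_left (lce T a b) (lce T b c))
  obtain ⟨-, hbc⟩ := (le_lce_iff T).1 (min_le_right (lce T a b) (lce T b c))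
  exact (le_lce_iff T).2 ⟨hlen, hab.trans hbc⟩

end LCE

section SuffixArray

variable {α : Type*} [LinearOrder α] {T : List α} {SA : ℕ → ℕ}

theorem SuffixesSorted.lce_le_min (hsorted : SuffixesSorted T SA) {i j k : ℕ}
    (hij : i < j) (hjk : j < k) (hk : k < T.length) :
    lce T (SA i) (SA k) ≤ min (lce T (SA i) (SA j)) (lce T (SA j) (SA k)) := by
  obtain ⟨hlen, hik⟩ := (le_lce_iff T).1 (le_refl (lce T (SA i) (SA k)))
  have hji := List.take_eq_of_lex_of_lex_s10 (hsorted i j hij (hjk.trans hk))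
    (hsorted j k hjk hk) hik
  exact le_min ((le_lce_iff T).2 ⟨hlen, hji.symm⟩) ((le_lce_iff T).2 ⟨hlen, hji.trans hik⟩)

theorem SuffixesSorted.lce_eq_inf'_lcpArr (hsorted : SuffixesSorted T SA) {i j : ℕ}
    (hij : i < j) (hj : j < T.length) :
    lce T (SA i) (SA j) =
      (Finset.Icc (i + 1) j).inf' (Finset.nonempty_Icc.mpr hij) (lcpArr T SA) := by
  induction j, hij using Nat.le_induction with
  | base => simp [lcpArr]
  | succ j hij ih =>
    have hstep : lce T (SA i) (SA (j + 1)) = min (lce T (SA i) (SA j)) (lcpArr T SA (j + 1)) :=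
      le_antisymm (hsorted.lce_le_min hij j.lt_succ_self hj) (min_lce_le_lce T _ _ _)
    rw [hstep, ih (by omega), Finset.inf'_Icc_eq_min _ hij j.lt_succ_self]
    simp

end SuffixArray

/-- with `q' < q < q''` suffix-array ranks of the suffixes at
text positions `p' = SA[q']`, `s = SA[q]`, `p'' = SA[q'']`, we have
`LCE(p', s) ≥ LCE(p'', s)` if and only if some position attaining
`min(LCP[q'+1..q''])` lies in the interval `[q+1, q'']`. -/
theorem lce_comparison_iff_threshold {α : Type*} [LinearOrder α]
    (T : List α) (SA : ℕ → ℕ)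
    (hsorted : ∀ i j, i < j → j < T.length →
      List.Lex (· < ·) (T.drop (SA i)) (T.drop (SA j)))
    (q' q q'' : ℕ) (h1 : q' < q) (h2 : q < q'') (h3 : q'' < T.length) :
    lce T (SA q'') (SA q) ≤ lce T (SA q') (SA q) ↔
      ∃ k, q + 1 ≤ k ∧ k ≤ q'' ∧
        lcpArr T SA k =
          (Finset.Icc (q' + 1) q'').inf' (Finset.nonempty_Icc.mpr (by omega))
            (lcpArr T SA) := by
  have hsorted : SuffixesSorted T SA := hsorted
  rw [lce_comm T (SA q''), hsorted.lce_eq_inf'_lcpArr h2 h3,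
    hsorted.lce_eq_inf'_lcpArr h1 (h2.trans h3), Finset.inf'_Icc_eq_min _ h1 h2,
    Finset.inf'_le_iff_exists_eq_min]
  simp only [Finset.mem_Icc, and_assoc]
end

section
/- The LF mapping of the BWT is a bijection on positions, and following LF from the rank of suffix T[p..] yields the rank of suffix T[p−1..]: LF(ISA[p]) = ISA[p−1] for all p ≥ 1. -/
/-!
Both claims follow from the factorization `LF = ISA ∘ cyclicPred ∘ SA` on `{0, …, n - 1}`.
Fix a row `i`, let `q = cyclicPred (SA i)` and `c = T[q] = BWT[i]`. Then `ISA q` counts the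
suffixes smaller than `T[q..]`. Those starting with a character below `c` number `C[c]`; those
starting with `c` correspond, after removing that character, to the suffixes `T[p..]` with
`T[p - 1] = c` below `T[SA i..]`, i.e. to the rows `j < i` with `BWT[j] = c`, which number
`rank_c(BWT, i) - 1`. The unique smallest sentinel makes removing the first character compatible
with the cyclic predecessor at position `0`.
-/

/-- The Burrows-Wheeler transform: `bwt T SA i = T[SA[i] - 1]`, with `T[-1]`
interpreted circularly as the last character of `T`. -/
def bwt {α : Type*} [Inhabited α] (T : List α) (SA : ℕ → ℕ) (i : ℕ) : α :=
  T[(SA i + T.length - 1) % T.length]!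

/-- `cnt T c` = number of characters of `T` strictly smaller than `c`. -/
def cnt {α : Type*} [LinearOrder α] [Inhabited α] (T : List α) (c : α) : ℕ :=
  ((Finset.range T.length).filter (fun j => T[j]! < c)).card

/-- `rankBWT T SA c i` = number of occurrences of `c` in `BWT[0..i]`. -/
def rankBWT {α : Type*} [LinearOrder α] [Inhabited α]
    (T : List α) (SA : ℕ → ℕ) (c : α) (i : ℕ) : ℕ :=
  ((Finset.range (i + 1)).filter (fun j => bwt T SA j = c)).card

/-- The LF mapping, in 0-based indexing:
`LF(i) = C[BWT[i]] + rank_{BWT[i]}(BWT, i) - 1`, where the rank counts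
occurrences of `BWT[i]` in `BWT[0..i]` inclusively. -/
def lf {α : Type*} [LinearOrder α] [Inhabited α]
    (T : List α) (SA : ℕ → ℕ) (i : ℕ) : ℕ :=
  cnt T (bwt T SA i) + rankBWT T SA (bwt T SA i) i - 1

open Finset

lemma Set.BijOn.card_filter_comp {α β : Type*} {f : α → β} {s : Finset α} {t : Finset β}
    (hf : Set.BijOn f s t) (P : β → Prop) [DecidablePred P] :
    #{a ∈ s | P (f a)} = #{b ∈ t | P b} := by
  refine card_nbij f (fun a ha => ?_) (hf.injOn.mono fun a ha => (mem_filter.1 ha).1)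
    (fun b hb => ?_)
  · simp only [coe_filter, Set.mem_ofPred_eq] at ha ⊢
    exact ⟨hf.mapsTo ha.1, ha.2⟩
  · simp only [coe_filter, Set.mem_ofPred_eq] at hb
    obtain ⟨a, ha, rfl⟩ := hf.surjOn hb.1
    exact ⟨a, by simpa using ⟨ha, hb.2⟩, rfl⟩

/-- `bwt T SA i = T[cyclicPred T.length (SA i)]!` holds by `rfl`. -/
def cyclicPred (n s : ℕ) : ℕ := (s + n - 1) % n

lemma cyclicPred_eq_ite {n s : ℕ} (hs : s < n) :
    cyclicPred n s = if s = 0 then n - 1 else s - 1 := by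
  unfold cyclicPred
  split_ifs with h
  · rw [h, zero_add, Nat.mod_eq_of_lt (by omega)]
  · rw [show s + n - 1 = s - 1 + n by omega, Nat.add_mod_right, Nat.mod_eq_of_lt (by omega)]

lemma bijOn_cyclicPred (n : ℕ) : Set.BijOn (cyclicPred n) (Set.Iio n) (Set.Iio n) := by
  refine ((Set.finite_Iio n).injOn_iff_bijOn_of_mapsTo fun s (hs : s < n) => ?_).1
    fun s (hs : s < n) t (ht : t < n) hst => ?_
  · exact Nat.mod_lt _ (by omega)
  · rw [cyclicPred_eq_ite hs, cyclicPred_eq_ite ht] at hst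
    split_ifs at hst <;> omega

section SuffixArray

variable {α : Type*} [LinearOrder α] {T : List α} {SA : ℕ → ℕ}

lemma bijOn_of_strictMonoOn_drop
    (hSA : Set.MapsTo SA (Set.Iio T.length) (Set.Iio T.length))
    (hmono : StrictMonoOn (fun i => T.drop (SA i)) (Set.Iio T.length)) :
    Set.BijOn SA (Set.Iio T.length) (Set.Iio T.length) :=
  ((Set.finite_Iio _).injOn_iff_bijOn_of_mapsTo hSA).1
    (hmono.injOn.of_comp (g := fun p => T.drop p))

lemma card_filter_range_eq_card_drop_lt
    (hSA : Set.MapsTo SA (Set.Iio T.length) (Set.Iio T.length))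
    (hmono : StrictMonoOn (fun i => T.drop (SA i)) (Set.Iio T.length))
    {i : ℕ} (hi : i < T.length) (Q : ℕ → Prop) [DecidablePred Q] :
    #{j ∈ range i | Q (SA j)} = #{p ∈ range T.length | T.drop p < T.drop (SA i) ∧ Q p} := by
  have hbij : Set.BijOn SA (range T.length) (range T.length) := by
    rw [coe_range]
    exact bijOn_of_strictMonoOn_drop hSA hmono
  rw [← hbij.card_filter_comp fun p => T.drop p < T.drop (SA i) ∧ Q p]
  congr 1
  ext j
  simp only [mem_filter, mem_range]
  constructor
  · rintro ⟨hji, hQ⟩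
    have hj : j < T.length := hji.trans hi
    exact ⟨hj, (hmono.lt_iff_lt hj hi).2 hji, hQ⟩
  · rintro ⟨hj, hlt, hQ⟩
    exact ⟨(hmono.lt_iff_lt hj hi).1 hlt, hQ⟩

end SuffixArray

section Sentinel

variable {α : Type*} [LinearOrder α] [Inhabited α] {T : List α}

lemma drop_lt_drop_iff {p q : ℕ} (hp : p < T.length) (hq : q < T.length) :
    T.drop p < T.drop q ↔
      T[p]! < T[q]! ∨ T[p]! = T[q]! ∧ T.drop (p + 1) < T.drop (q + 1) := by
  rw [List.drop_eq_getElem_cons hp, List.drop_eq_getElem_cons hq, getElem!_pos T p hp,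
    getElem!_pos T q hq, List.cons_lt_cons_iff]

/-- If `s = 0` then `T[cyclicPred s]` is the sentinel, and by its uniqueness so is
`T[cyclicPred t]`, whence `t = 0` as well and both sides are false. -/
lemma drop_lt_drop_iff_of_sentinel
    (hsent : ∀ i, i < T.length - 1 → T[T.length - 1]! < T[i]!)
    {s t : ℕ} (hs : s < T.length) (ht : t < T.length)
    (hst : T[cyclicPred T.length s]! = T[cyclicPred T.length t]!) :
    T.drop s < T.drop t ↔
      T.drop (cyclicPred T.length s + 1) < T.drop (cyclicPred T.length t + 1) := by
  rw [cyclicPred_eq_ite hs, cyclicPred_eq_ite ht] at hst ⊢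
  have hne : ∀ i, i < T.length - 1 → T[T.length - 1]! ≠ T[i]! := fun i hi => (hsent i hi).ne
  split_ifs at hst ⊢ with h0s h0t h0t
  · simp [h0s, h0t]
  · exact absurd hst (hne _ (by omega))
  · exact absurd hst.symm (hne _ (by omega))
  · rw [Nat.sub_add_cancel (by omega), Nat.sub_add_cancel (by omega)]

lemma card_drop_lt_drop_cyclicPred
    (hsent : ∀ i, i < T.length - 1 → T[T.length - 1]! < T[i]!) {s : ℕ} (hs : s < T.length) :
    #{p ∈ range T.length | T.drop p < T.drop (cyclicPred T.length s)} =
      cnt T T[cyclicPred T.length s]! +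
        #{p ∈ range T.length | T.drop p < T.drop s ∧
          T[cyclicPred T.length p]! = T[cyclicPred T.length s]!} := by
  set n := T.length
  set q := cyclicPred n s
  have hq : q < n := (bijOn_cyclicPred n).mapsTo hs
  have hsplit : {p ∈ range n | T.drop p < T.drop q} =
      {p ∈ range n | T[p]! < T[q]!} ∪
        {p ∈ range n | T[p]! = T[q]! ∧ T.drop (p + 1) < T.drop (q + 1)} := by
    rw [← filter_or]
    exact filter_congr fun p hp => drop_lt_drop_iff (mem_range.1 hp) hq
  have hdisj : Disjoint {p ∈ range n | T[p]! < T[q]!}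
      {p ∈ range n | T[p]! = T[q]! ∧ T.drop (p + 1) < T.drop (q + 1)} :=
    disjoint_filter.2 fun p _ hlt heq => hlt.ne heq.1
  have hshift : #{p ∈ range n | T[p]! = T[q]! ∧ T.drop (p + 1) < T.drop (q + 1)} =
      #{p ∈ range n | T.drop p < T.drop s ∧ T[cyclicPred n p]! = T[q]!} := by
    have hpred : Set.BijOn (cyclicPred n) (range n) (range n) := by
      rw [coe_range]
      exact bijOn_cyclicPred n
    rw [← hpred.card_filter_comp fun p => T[p]! = T[q]! ∧ T.drop (p + 1) < T.drop (q + 1)]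
    refine congrArg card (filter_congr fun p hp => ?_)
    rw [and_comm]
    exact and_congr_left fun hpq =>
      (drop_lt_drop_iff_of_sentinel hsent (mem_range.1 hp) hs hpq).symm
  rw [hsplit, card_union_of_disjoint hdisj, hshift]
  rfl

lemma lf_eq_isa_cyclicPred_sa {SA ISA : ℕ → ℕ}
    (hSA : Set.MapsTo SA (Set.Iio T.length) (Set.Iio T.length))
    (hmono : StrictMonoOn (fun i => T.drop (SA i)) (Set.Iio T.length))
    (hISA : ∀ p, p < T.length → ISA p < T.length ∧ SA (ISA p) = p)
    (hsent : ∀ i, i < T.length - 1 → T[T.length - 1]! < T[i]!) {i : ℕ} (hi : i < T.length) :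
    lf T SA i = ISA (cyclicPred T.length (SA i)) := by
  set n := T.length
  set q := cyclicPred n (SA i)
  have hq : q < n := (bijOn_cyclicPred n).mapsTo (hSA hi)
  have hbwt : bwt T SA i = T[q]! := rfl
  have hISAq : ISA q = #{p ∈ range n | T.drop p < T.drop q} := by
    simpa [(hISA q hq).2] using
      card_filter_range_eq_card_drop_lt hSA hmono (hISA q hq).1 fun _ => True
  have hrank : rankBWT T SA T[q]! i =
      #{j ∈ range i | T[cyclicPred n (SA j)]! = T[q]!} + 1 := by
    rw [rankBWT, range_add_one, filter_insert, if_pos hbwt, card_insert_of_notMem (by simp)]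
    rfl
  rw [hISAq, card_drop_lt_drop_cyclicPred hsent (hSA hi),
    ← card_filter_range_eq_card_drop_lt hSA hmono hi, lf, hbwt, hrank, ← add_assoc,
    Nat.add_sub_cancel]

end Sentinel

theorem lf_bijective_and_steps_back_general {α : Type*} [LinearOrder α] [Inhabited α]
    (T : List α) (SA ISA : ℕ → ℕ)
    (hSA : ∀ i, i < T.length → SA i < T.length)
    (hsorted : ∀ i j, i < j → j < T.length →
      List.Lex (· < ·) (T.drop (SA i)) (T.drop (SA j)))
    (hISA : ∀ p, p < T.length → ISA p < T.length ∧ SA (ISA p) = p)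
    (hsent : ∀ i, i < T.length - 1 → T[T.length - 1]! < T[i]!) :
    Set.BijOn (lf T SA) (Set.Iio T.length) (Set.Iio T.length) ∧
      ∀ p, 1 ≤ p → p < T.length → lf T SA (ISA p) = ISA (p - 1) := by
  have hmono : StrictMonoOn (fun i => T.drop (SA i)) (Set.Iio T.length) :=
    fun i _ j hj hij => hsorted i j hij hj
  have hISAbij : Set.BijOn ISA (Set.Iio T.length) (Set.Iio T.length) :=
    ((Set.finite_Iio _).injOn_iff_bijOn_of_mapsTo fun p hp => (hISA p hp).1).1
      (Set.LeftInvOn.injOn fun p hp => (hISA p hp).2)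
  have hlf : Set.EqOn (lf T SA) (ISA ∘ cyclicPred T.length ∘ SA) (Set.Iio T.length) :=
    fun i hi => lf_eq_isa_cyclicPred_sa hSA hmono hISA hsent hi
  refine ⟨(hISAbij.comp ((bijOn_cyclicPred _).comp (bijOn_of_strictMonoOn_drop hSA hmono))).congr
    hlf.symm, fun p hp1 hp2 => ?_⟩
  rw [hlf (hISA p hp2).1, Function.comp_apply, Function.comp_apply, (hISA p hp2).2,
    cyclicPred_eq_ite hp2, if_neg (by omega)]

/-- for a text `T` ending in a unique smallest sentinel, with
suffix array `SA` and inverse `ISA`, the LF mapping is a bijection on the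
positions `{0, ..., n-1}`, and `LF(ISA[p]) = ISA[p-1]` for all `p ≥ 1`. -/
theorem lf_bijective_and_steps_back {α : Type*} [LinearOrder α] [Inhabited α]
    (T : List α) (SA ISA : ℕ → ℕ)
    (hn : 0 < T.length)
    (hSA : ∀ i, i < T.length → SA i < T.length)
    (hsorted : ∀ i j, i < j → j < T.length →
      List.Lex (· < ·) (T.drop (SA i)) (T.drop (SA j)))
    (hISA : ∀ p, p < T.length → ISA p < T.length ∧ SA (ISA p) = p)
    (hsent : ∀ i, i < T.length - 1 → T[T.length - 1]! < T[i]!) :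
    Set.BijOn (lf T SA) (Set.Iio T.length) (Set.Iio T.length) ∧
      ∀ p, 1 ≤ p → p < T.length → lf T SA (ISA p) = ISA (p - 1) :=
  lf_bijective_and_steps_back_general T SA ISA hSA hsorted hISA hsent
end

section
/- If MS[i+1] = (pos, len) are valid matching statistics at i+1 and p is any position with T[p−1] = P[i], then P[i..i+ℓ] = T[p−1..p−1+ℓ] where ℓ = min(len, LCE(p, pos)); hence setting MS[i] = (p−1, 1 + min(len, LCE(p, pos))) gives a valid occurrence (the pair matches, though possibly not maximal). -/
namespace List

variable {α : Type*}

theorem take_eq_take_of_le {l₁ l₂ : List α} {m n : ℕ} (h : l₁.take n = l₂.take n)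
    (hmn : m ≤ n) : l₁.take m = l₂.take m := by
  rw [← min_eq_left hmn, ← take_take, h, take_take]

theorem take_succ_drop_eq_of_getElem?_eq {l₁ l₂ : List α} {a b n : ℕ}
    (hab : l₁[a]? = l₂[b]?) (h : (l₁.drop (a + 1)).take n = (l₂.drop (b + 1)).take n) :
    (l₁.drop a).take (n + 1) = (l₂.drop b).take (n + 1) := by
  rw [drop_eq_getElem?_toList_append (l := l₁), drop_eq_getElem?_toList_append (l := l₂), hab]
  cases hb : l₂[b]? with
  | none =>
    -- both lists end before the compared positions, so both sides are empty
    rw [hb, getElem?_eq_none_iff] at hab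
    rw [getElem?_eq_none_iff] at hb
    simp [drop_eq_nil_of_le (Nat.le_succ_of_le hab), drop_eq_nil_of_le (Nat.le_succ_of_le hb)]
  | some x => simpa using h

end List

theorem take_drop_lce_eq {α : Type*} (T : List α) (a b : ℕ) :
    (T.drop a).take (lce T a b) = (T.drop b).take (lce T a b) :=
  letI := Classical.decPred (fun ℓ : ℕ => (T.drop a).take ℓ = (T.drop b).take ℓ)
  Nat.findGreatest_spec (P := fun ℓ => (T.drop a).take ℓ = (T.drop b).take ℓ)
    (Nat.zero_le _) rfl

theorem ms_candidate_occurrence_general {α : Type*} (T P : List α)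
    (i pos len p : ℕ)
    (hp : 1 ≤ p)
    (hoccur : (T.drop pos).take len = (P.drop (i + 1)).take len)
    (hchar : T[p - 1]? = P[i]?) :
    (P.drop i).take (min len (lce T p pos) + 1) =
      (T.drop (p - 1)).take (min len (lce T p pos) + 1) := by
  obtain ⟨q, rfl⟩ := Nat.exists_eq_add_of_le' hp
  set ℓ := min len (lce T (q + 1) pos)
  have hlce : (T.drop (q + 1)).take ℓ = (T.drop pos).take ℓ :=
    List.take_eq_take_of_le (take_drop_lce_eq T _ _) (min_le_right _ _)
  have hP : (T.drop pos).take ℓ = (P.drop (i + 1)).take ℓ :=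
    List.take_eq_take_of_le hoccur (min_le_left _ _)
  exact List.take_succ_drop_eq_of_getElem?_eq hchar.symm (hP.symm.trans hlce.symm)

/-- if `MS[i+1] = (pos, len)` is a valid occurrence at `i+1`
(`T[pos..pos+len-1] = P[i+1..i+len]`) and `p ≥ 1` is any position with
`T[p-1] = P[i]`, then with `ℓ = min(len, LCE(p, pos))` we get
`P[i..i+ℓ] = T[p-1..p-1+ℓ]`; hence `(p-1, ℓ+1)` is a valid (though possibly
non-maximal) occurrence for position `i`. -/
theorem ms_candidate_occurrence {α : Type*} (T P : List α)
    (i pos len p : ℕ)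
    (hp : 1 ≤ p)
    (hlenP : i + 1 + len ≤ P.length)
    (hlenT : pos + len ≤ T.length)
    (hoccur : (T.drop pos).take len = (P.drop (i + 1)).take len)
    (hchar : T[p - 1]? = P[i]?) :
    (P.drop i).take (min len (lce T p pos) + 1) =
      (T.drop (p - 1)).take (min len (lce T p pos) + 1) :=
  ms_candidate_occurrence_general T P i pos len p hp hoccur hchar
end
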